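/- Let Φ : ℝⁿ → ℝ be C-strongly convex with minimizer m, and for λ > 0 let μ_λ be the probability measure with density proportional to e^{−λΦ(ξ)} with respect to Lebesgue measure. Then μ_λ concentrates at m: for every δ > 0, μ_λ({ξ : ‖ξ − m‖ > δ}) → 0 as λ → ∞. -/

import Mathlib

open MeasureTheory

private lemma gibbs_quad_growth {n : ℕ} (Φ : EuclideanSpace ℝ (Fin n) → ℝ) (C : ℝ) (hC : 0 < C)
    (hconv : ConvexOn ℝ Set.univ (fun x => Φ x - C / 2 * ‖x‖ ^ 2))
    (m : EuclideanSpace ℝ (Fin n)) (hmin : ∀ x, Φ m ≤ Φ x) (x : EuclideanSpace ℝ (Fin n)) :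
    Φ m + C/4 * ‖x - m‖^2 ≤ Φ x := by
  have h := hconv.2 (Set.mem_univ x) (Set.mem_univ m) (by norm_num : (0:ℝ) ≤ 1/2)
    (by norm_num : (0:ℝ) ≤ 1/2) (by norm_num)
  set z := (1/2:ℝ) • x + (1/2:ℝ) • m with hz
  have hz2 : z = (1/2:ℝ) • (x + m) := by rw [smul_add]
  have hnz : ‖z‖^2 = (1/2)^2 * ‖x + m‖^2 := by
    rw [hz2, norm_smul]; simp [mul_pow]
  have hpar := parallelogram_law_with_norm ℝ x m
  have hmz := hmin z
  simp only [smul_eq_mul] at h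
  nlinarith [norm_nonneg (x+m), norm_nonneg (x-m), sq_nonneg (‖x‖ - ‖m‖)]

private lemma gibbs_gaussian_integrable {n : ℕ} (b : ℝ) (hb : 0 < b) :
    Integrable (fun v : EuclideanSpace ℝ (Fin n) => Real.exp (-b * ‖v‖^2)) := by
  have h1 := GaussianFourier.integrable_cexp_neg_mul_sq_norm_add
    (V := EuclideanSpace ℝ (Fin n)) (b := (b:ℂ)) (by simpa using hb) 0 0
  have h2 := h1.norm
  refine h2.congr (Filter.Eventually.of_forall fun v => ?_)
  simp [Complex.norm_exp]
  norm_cast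
  exact Or.inl rfl

private lemma gibbs_integrable {n : ℕ} (Φ : EuclideanSpace ℝ (Fin n) → ℝ)
    (hcont : Continuous Φ) (C : ℝ) (hC : 0 < C)
    (m : EuclideanSpace ℝ (Fin n))
    (hquad : ∀ x, Φ m + C/4 * ‖x - m‖^2 ≤ Φ x)
    (lam : ℝ) (hlam : 0 < lam) :
    Integrable (fun ξ : EuclideanSpace ℝ (Fin n) => Real.exp (-lam * Φ ξ)) := by
  have hb : 0 < lam * (C/4) := by positivity
  have hg : Integrable
      (fun ξ : EuclideanSpace ℝ (Fin n) => Real.exp (-(lam * (C/4)) * ‖ξ - m‖^2)) := by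
    exact (gibbs_gaussian_integrable (lam * (C/4)) hb).comp_sub_right m
  refine Integrable.mono' (hg.const_mul (Real.exp (-lam * Φ m)))
    (Real.continuous_exp.comp (continuous_const.mul hcont)).aestronglyMeasurable
    (Filter.Eventually.of_forall fun ξ => ?_)
  rw [Real.norm_eq_abs, abs_of_nonneg (Real.exp_nonneg _), ← Real.exp_add]
  apply Real.exp_le_exp.mpr
  have := hquad ξ
  nlinarith [norm_nonneg (ξ - m), sq_nonneg ‖ξ - m‖]

/-- Let `Φ : ℝⁿ → ℝ` be `C`-strongly convex (`C > 0`) and continuous, with minimizer `m`,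
and let `μ_λ` be the probability measure with density proportional to `e^{−λΦ}`. Then `μ_λ`
concentrates at `m`: for every `δ > 0`, `μ_λ({ξ : ‖ξ − m‖ > δ}) → 0` as `λ → ∞`. Here
`μ_λ(S)` is expressed as the ratio `∫_S e^{−λΦ} / ∫ e^{−λΦ}` of Lebesgue integrals. -/
theorem gibbs_concentration {n : ℕ}
    (Φ : EuclideanSpace ℝ (Fin n) → ℝ) (hcont : Continuous Φ) (C : ℝ) (hC : 0 < C)
    (hconv : ConvexOn ℝ Set.univ (fun x => Φ x - C / 2 * ‖x‖ ^ 2))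
    (m : EuclideanSpace ℝ (Fin n)) (hmin : ∀ x, Φ m ≤ Φ x)
    (δ : ℝ) (hδ : 0 < δ) :
    Filter.Tendsto
      (fun lam : ℝ =>
        (∫ ξ in {ξ : EuclideanSpace ℝ (Fin n) | δ < ‖ξ - m‖}, Real.exp (-lam * Φ ξ)) /
          ∫ ξ : EuclideanSpace ℝ (Fin n), Real.exp (-lam * Φ ξ))
      Filter.atTop (nhds 0) := by
  have hquad := gibbs_quad_growth Φ C hC hconv m hmin
  have hint := gibbs_integrable Φ hcont C hC m hquad
  set K : ℝ := C/4 with hK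
  have hKpos : 0 < K := by positivity
  set S : Set (EuclideanSpace ℝ (Fin n)) := {ξ | δ < ‖ξ - m‖} with hS
  have hSmeas : MeasurableSet S := by
    have : IsOpen S := isOpen_lt continuous_const ((continuous_id.sub continuous_const).norm)
    exact this.measurableSet
  -- choose a small ball around m where Φ is close to Φ m
  obtain ⟨r, hrpos, hΦr⟩ : ∃ r > 0, ∀ x ∈ Metric.closedBall m r,
      Φ x ≤ Φ m + K * δ^2 / 2 := by
    have hc := Metric.continuousAt_iff.mp (hcont.continuousAt (x := m))
    obtain ⟨ε, hε, hε'⟩ := hc (K * δ^2 / 2) (by positivity)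
    refine ⟨ε/2, by positivity, fun x hx => ?_⟩
    have hd : dist x m < ε := lt_of_le_of_lt (Metric.mem_closedBall.mp hx) (by linarith)
    have := hε' hd
    rw [Real.dist_eq, abs_lt] at this
    linarith [this.2]
  set V : ℝ := (volume (Metric.closedBall m r)).toReal with hV
  have hVpos : 0 < V := by
    rw [hV, ENNReal.toReal_pos_iff]
    exact ⟨Metric.measure_closedBall_pos volume m hrpos, measure_closedBall_lt_top⟩
  set A : ℝ := ∫ ξ : EuclideanSpace ℝ (Fin n), Real.exp (-(1:ℝ) * Φ ξ) with hA
  have hA0 : 0 ≤ A := integral_nonneg fun ξ => Real.exp_nonneg _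
  set b1 : ℝ := Φ m + K * δ^2 with hb1
  set b2 : ℝ := Φ m + K * δ^2 / 2 with hb2
  -- lower bound on denominator, for lam ≥ 1
  have hden : ∀ lam : ℝ, 1 ≤ lam →
      V * Real.exp (-lam * b2) ≤ ∫ ξ : EuclideanSpace ℝ (Fin n), Real.exp (-lam * Φ ξ) := by
    intro lam hlam
    have h1 : V * Real.exp (-lam * b2)
        ≤ ∫ ξ in Metric.closedBall m r, Real.exp (-lam * Φ ξ) := by
      have hc : ∫ ξ in Metric.closedBall m r,
          Real.exp (-lam * b2) = V * Real.exp (-lam * b2) := by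
        rw [setIntegral_const, smul_eq_mul]; rfl
      rw [← hc]
      refine setIntegral_mono_on ((integrableOn_const_iff (C := Real.exp (-lam * b2))).mpr (Or.inr ?_))
        ((hint lam (by linarith)).integrableOn) measurableSet_closedBall ?_
      · exact measure_closedBall_lt_top
      · intro x hx
        apply Real.exp_le_exp.mpr
        have := hΦr x hx
        nlinarith [this]
    refine h1.trans (setIntegral_le_integral (hint lam (by linarith))
      (Filter.Eventually.of_forall fun ξ => Real.exp_nonneg _))
  -- upper bound on numerator, for lam ≥ 1
  have hnum : ∀ lam : ℝ, 1 ≤ lam →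
      (∫ ξ in S, Real.exp (-lam * Φ ξ)) ≤ Real.exp (-(lam - 1) * b1) * A := by
    intro lam hlam
    have h1 : (∫ ξ in S, Real.exp (-lam * Φ ξ))
        ≤ ∫ ξ in S, Real.exp (-(lam-1) * b1) * Real.exp (-(1:ℝ) * Φ ξ) := by
      refine setIntegral_mono_on ((hint lam (by linarith)).integrableOn)
        (((hint 1 one_pos).const_mul _).integrableOn) hSmeas ?_
      intro x hx
      rw [← Real.exp_add]
      apply Real.exp_le_exp.mpr
      have hx' : δ < ‖x - m‖ := hx
      have hq := hquad x
      have hb1x : b1 ≤ Φ x := by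
        have : δ^2 ≤ ‖x - m‖^2 := by nlinarith [norm_nonneg (x - m)]
        nlinarith
      nlinarith
    have h2 : (∫ ξ in S, Real.exp (-(lam-1) * b1) * Real.exp (-(1:ℝ) * Φ ξ))
        ≤ ∫ ξ : EuclideanSpace ℝ (Fin n),
            Real.exp (-(lam-1) * b1) * Real.exp (-(1:ℝ) * Φ ξ) :=
      setIntegral_le_integral ((hint 1 one_pos).const_mul _)
        (Filter.Eventually.of_forall fun ξ => by positivity)
    exact h1.trans (h2.trans (le_of_eq (integral_const_mul _ _)))
  -- squeeze
  have hub : ∀ᶠ lam in Filter.atTop,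
      (∫ ξ in S, Real.exp (-lam * Φ ξ)) / (∫ ξ : EuclideanSpace ℝ (Fin n),
        Real.exp (-lam * Φ ξ))
      ≤ (A / V) * Real.exp (b1 - lam * (K * δ^2 / 2)) := by
    filter_upwards [Filter.eventually_ge_atTop (1:ℝ)] with lam hlam
    have hd := hden lam hlam
    have hn := hnum lam hlam
    have hdpos : 0 < V * Real.exp (-lam * b2) := by positivity
    calc (∫ ξ in S, Real.exp (-lam * Φ ξ)) / (∫ ξ : EuclideanSpace ℝ (Fin n),
          Real.exp (-lam * Φ ξ))
        ≤ (Real.exp (-(lam - 1) * b1) * A) / (V * Real.exp (-lam * b2)) := by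
          exact div_le_div₀ (by positivity) hn hdpos hd
      _ = (A / V) * Real.exp (b1 - lam * (K * δ^2 / 2)) := by
          rw [mul_comm (Real.exp (-(lam - 1) * b1)) A, mul_div_mul_comm, ← Real.exp_sub]
          congr 1
          rw [hb1, hb2]; ring
  have hlb : ∀ᶠ lam in Filter.atTop, (0:ℝ)
      ≤ (∫ ξ in S, Real.exp (-lam * Φ ξ)) / (∫ ξ : EuclideanSpace ℝ (Fin n),
        Real.exp (-lam * Φ ξ)) := by
    refine Filter.Eventually.of_forall fun lam => div_nonneg ?_ ?_
    · exact integral_nonneg fun ξ => Real.exp_nonneg _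
    · exact integral_nonneg fun ξ => Real.exp_nonneg _
  have hgtend : Filter.Tendsto (fun lam : ℝ => (A / V) * Real.exp (b1 - lam * (K * δ^2 / 2)))
      Filter.atTop (nhds 0) := by
    rw [show (0:ℝ) = (A / V) * 0 by ring]
    refine Filter.Tendsto.const_mul _ ?_
    refine Real.tendsto_exp_atBot.comp ?_
    apply Filter.tendsto_atBot_add_const_left
    have : Filter.Tendsto (fun lam : ℝ => lam * (K * δ^2 / 2)) Filter.atTop Filter.atTop :=
      Filter.Tendsto.atTop_mul_const (by positivity) Filter.tendsto_id
    exact Filter.tendsto_neg_atBot_iff.mpr this |>.congr (fun x => by ring)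
  exact tendsto_of_tendsto_of_tendsto_of_le_of_le' tendsto_const_nhds hgtend hlb hub
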